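/- Suppose L is additionally linearly ordered. Let S = (R_i)_{i∈I} be a family of fuzzy relations on U and X, X' fuzzy relations on U. Then for each k ∈ {1,2,3}: (a) if SD_k(S)(X) < (X ≈ X') then SD_k(S)(X') = SD_k(S)(X); (b) if SD_k(S)(X) ≥ (X ≈ X') then SD_k(S)(X') ≥ (X ≈ X'). -/
import Mathlib


open scoped symmDiff

/- L is a linearly ordered complete Heyting algebra, i.e. a complete linear order,
regarded as a complete residuated lattice with ⊗ = ⊓, residuum the Heyting
implication ⇨, biresiduum ⇔ (`bihimp`), and top element as the unit 1. -/
variable {L : Type*} [CompleteLinearOrder L] {U : Type*}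

/-- Composition of fuzzy relations: (R ∘ P)(u,v) = ⨆ w, R(u,w) ⊓ P(w,v). -/
def fcomp (R P : U → U → L) : U → U → L := fun u v => ⨆ w, R u w ⊓ P w v

/-- Inclusion degree of fuzzy relations: R ≲ Q. -/
def incl (R Q : U → U → L) : L := ⨅ u, ⨅ v, R u v ⇨ Q u v

/-- Equality degree of fuzzy relations: R ≈ Q. -/
def eqd (R Q : U → U → L) : L := ⨅ u, ⨅ v, R u v ⇔ Q u v

/-- SD_1(S)(X) = ⨅ i, ((X ∘ R_i) ≲ (R_i ∘ X)). -/
def SD1 {I : Type*} (S : I → U → U → L) (X : U → U → L) : L :=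
  ⨅ i, incl (fcomp X (S i)) (fcomp (S i) X)

/-- SD_2(S)(X) = ⨅ i, ((R_i ∘ X) ≲ (X ∘ R_i)). -/
def SD2 {I : Type*} (S : I → U → U → L) (X : U → U → L) : L :=
  ⨅ i, incl (fcomp (S i) X) (fcomp X (S i))

/-- SD_3(S)(X) = SD_1(S)(X) ⊓ SD_2(S)(X). -/
def SD3 {I : Type*} (S : I → U → U → L) (X : U → U → L) : L :=
  SD1 S X ⊓ SD2 S X

lemma eqd_comm (X X' : U → U → L) : eqd X X' = eqd X' X := by
  simp [eqd, bihimp_comm]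

lemma eqd_inf_le (X X' : U → U → L) (u v : U) : eqd X X' ⊓ X u v ≤ X' u v := by
  have h1 : eqd X X' ≤ X u v ⇨ X' u v := by
    refine le_trans (iInf_le _ u) (le_trans (iInf_le _ v) ?_)
    rw [bihimp]; exact inf_le_right
  exact le_trans (inf_le_inf_right _ h1) himp_inf_le

lemma eqd_fcomp_left (X X' R : U → U → L) (u v : U) :
    eqd X X' ⊓ fcomp X R u v ≤ fcomp X' R u v := by
  rw [fcomp, inf_iSup_eq]
  refine iSup_le fun w => ?_
  refine le_trans ?_ (le_iSup (fun w => X' u w ⊓ R w v) w)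
  rw [← inf_assoc]
  exact inf_le_inf_right _ (eqd_inf_le X X' u w)

lemma eqd_fcomp_right (X X' R : U → U → L) (u v : U) :
    eqd X X' ⊓ fcomp R X u v ≤ fcomp R X' u v := by
  rw [fcomp, inf_iSup_eq]
  refine iSup_le fun w => ?_
  refine le_trans ?_ (le_iSup (fun w => R u w ⊓ X' w v) w)
  rw [inf_left_comm]
  exact inf_le_inf_left _ (eqd_inf_le X X' w v)

lemma key1 {I : Type*} (S : I → U → U → L) (X X' : U → U → L) :
    SD1 S X ⊓ eqd X X' ≤ SD1 S X' := by
  refine le_iInf fun i => le_iInf fun u => le_iInf fun v => ?_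
  rw [le_himp_iff]
  have h1 : eqd X X' ⊓ fcomp X' (S i) u v ≤ fcomp X (S i) u v := by
    rw [eqd_comm]; exact eqd_fcomp_left X' X (S i) u v
  have h2 : SD1 S X ⊓ fcomp X (S i) u v ≤ fcomp (S i) X u v := by
    have : SD1 S X ≤ fcomp X (S i) u v ⇨ fcomp (S i) X u v :=
      le_trans (iInf_le _ i) (le_trans (iInf_le _ u) (iInf_le _ v))
    exact le_trans (inf_le_inf_right _ this) himp_inf_le
  have h3 : eqd X X' ⊓ fcomp (S i) X u v ≤ fcomp (S i) X' u v :=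
    eqd_fcomp_right X X' (S i) u v
  calc SD1 S X ⊓ eqd X X' ⊓ fcomp X' (S i) u v
      ≤ eqd X X' ⊓ (SD1 S X ⊓ (eqd X X' ⊓ fcomp X' (S i) u v)) := by
        simp only [← inf_assoc]
        refine inf_le_inf_right _ ?_
        simp [inf_comm, inf_assoc, inf_left_comm, le_refl]
    _ ≤ eqd X X' ⊓ (SD1 S X ⊓ fcomp X (S i) u v) :=
        inf_le_inf_left _ (inf_le_inf_left _ h1)
    _ ≤ eqd X X' ⊓ fcomp (S i) X u v := inf_le_inf_left _ h2
    _ ≤ fcomp (S i) X' u v := h3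

lemma key2 {I : Type*} (S : I → U → U → L) (X X' : U → U → L) :
    SD2 S X ⊓ eqd X X' ≤ SD2 S X' := by
  refine le_iInf fun i => le_iInf fun u => le_iInf fun v => ?_
  rw [le_himp_iff]
  have h1 : eqd X X' ⊓ fcomp (S i) X' u v ≤ fcomp (S i) X u v := by
    rw [eqd_comm]; exact eqd_fcomp_right X' X (S i) u v
  have h2 : SD2 S X ⊓ fcomp (S i) X u v ≤ fcomp X (S i) u v := by
    have : SD2 S X ≤ fcomp (S i) X u v ⇨ fcomp X (S i) u v :=
      le_trans (iInf_le _ i) (le_trans (iInf_le _ u) (iInf_le _ v))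
    exact le_trans (inf_le_inf_right _ this) himp_inf_le
  have h3 : eqd X X' ⊓ fcomp X (S i) u v ≤ fcomp X' (S i) u v :=
    eqd_fcomp_left X X' (S i) u v
  calc SD2 S X ⊓ eqd X X' ⊓ fcomp (S i) X' u v
      ≤ eqd X X' ⊓ (SD2 S X ⊓ (eqd X X' ⊓ fcomp (S i) X' u v)) := by
        simp only [← inf_assoc]
        refine inf_le_inf_right _ ?_
        simp [inf_comm, inf_assoc, inf_left_comm, le_refl]
    _ ≤ eqd X X' ⊓ (SD2 S X ⊓ fcomp (S i) X u v) :=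
        inf_le_inf_left _ (inf_le_inf_left _ h1)
    _ ≤ eqd X X' ⊓ fcomp X (S i) u v := inf_le_inf_left _ h2
    _ ≤ fcomp X' (S i) u v := h3

lemma abst {s s' e : L} (h1 : s ⊓ e ≤ s') (h2 : s' ⊓ e ≤ s) :
    (s < e → s' = s) ∧ (e ≤ s → e ≤ s') := by
  constructor
  · intro hlt
    have hs : s ≤ s' := le_trans (le_inf le_rfl hlt.le) h1
    refine le_antisymm ?_ hs
    rcases le_total e s' with h | h
    · exact absurd ((inf_eq_right.mpr h ▸ h2 : e ≤ s)) hlt.not_ge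
    · exact le_trans (le_inf le_rfl h) h2
  · intro he
    exact le_trans (le_inf he le_rfl) h1

/-- Over a linearly ordered complete Heyting algebra, for each k ∈ {1,2,3}:
(a) if SD_k(S)(X) < (X ≈ X') then SD_k(S)(X') = SD_k(S)(X);
(b) if SD_k(S)(X) ≥ (X ≈ X') then SD_k(S)(X') ≥ (X ≈ X'). -/
theorem stmt6 [Nonempty U] {I : Type*} (S : I → U → U → L) (X X' : U → U → L) :
    ((SD1 S X < eqd X X' → SD1 S X' = SD1 S X) ∧
      (eqd X X' ≤ SD1 S X → eqd X X' ≤ SD1 S X')) ∧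
    ((SD2 S X < eqd X X' → SD2 S X' = SD2 S X) ∧
      (eqd X X' ≤ SD2 S X → eqd X X' ≤ SD2 S X')) ∧
    ((SD3 S X < eqd X X' → SD3 S X' = SD3 S X) ∧
      (eqd X X' ≤ SD3 S X → eqd X X' ≤ SD3 S X')) := by
  have e12 : eqd X' X = eqd X X' := (eqd_comm X X').symm
  have k1 := key1 S X X'
  have k1' := key1 S X' X; rw [e12] at k1'
  have k2 := key2 S X X'
  have k2' := key2 S X' X; rw [e12] at k2'
  have k3 : SD3 S X ⊓ eqd X X' ≤ SD3 S X' := by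
    rw [SD3, SD3]
    exact le_inf (le_trans (inf_le_inf_right _ inf_le_left) k1)
      (le_trans (inf_le_inf_right _ inf_le_right) k2)
  have k3' : SD3 S X' ⊓ eqd X X' ≤ SD3 S X := by
    rw [SD3, SD3]
    exact le_inf (le_trans (inf_le_inf_right _ inf_le_left) k1')
      (le_trans (inf_le_inf_right _ inf_le_right) k2')
  exact ⟨abst k1 k1', abst k2 k2', abst k3 k3'⟩
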